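/- arXiv:1304.4491 — 3 statements merged into one kernel-verified Lean document; each statement's English description precedes it below -/
import Mathlib

section
/- Let p ≥ 3 be a prime. The number of elements a ∈ F_p such that the diagonal line j = i + a is a desert line of the Periodic Point Diagram of x ↦ x^2 + c (i.e., such that for all i ∈ F_p and all r ≥ 1, h_i^r(i+a) ≠ i + a) is exactly (p-1)/2. -/
/-!
A periodic point of `h_i` is the image under `h_i` of its predecessor on the cycle, so if `i + a`
is periodic then `i + a = y ^ 2 + i`, i.e. `a` is a square. Conversely, if `a = b ^ 2` then
`b = i + a` for `i = b - b ^ 2`, and `h_i b = b`. Desert lines are thus exactly the non-squares,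
and there are `(p - 1) / 2` of these because the quadratic character sums to zero.
-/

open Finset

theorem FiniteField.ncard_not_isSquare {F : Type*} [Field F] [Fintype F] (hF : ringChar F ≠ 2) :
    {a : F | ¬IsSquare a}.ncard = (Fintype.card F - 1) / 2 := by
  classical
  have hχ (a : F) : quadraticChar F a =
      (if a ≠ 0 then 1 else 0) - 2 * (if ¬IsSquare a then 1 else 0) := by
    by_cases h0 : a = 0
    · simp [h0]
    by_cases hsq : IsSquare a
    · simp [h0, hsq, (quadraticChar_one_iff_isSquare h0).mpr hsq]
    · simp [h0, hsq, quadraticChar_neg_one_iff_not_isSquare.mpr hsq]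
  have hsum := quadraticChar_sum_zero hF
  simp only [hχ, sum_sub_distrib, ← mul_sum, sum_boole] at hsum
  have hne : #{a : F | a ≠ 0} = Fintype.card F - 1 := by
    rw [filter_ne', card_erase_of_mem (mem_univ _), card_univ]
  have hpos : 0 < Fintype.card F := Fintype.card_pos
  rw [Set.ncard_eq_toFinset_card', Set.toFinset_ofPred]
  omega

theorem isSquare_iff_exists_periodic_shift {R : Type*} [CommRing R] (a : R) :
    IsSquare a ↔ ∃ i : R, ∃ r : ℕ, 1 ≤ r ∧ (fun x : R => x ^ 2 + i)^[r] (i + a) = i + a := by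
  constructor
  · rintro ⟨b, rfl⟩
    exact ⟨b - b * b, 1, le_rfl, by simp only [Function.iterate_one]; ring⟩
  · rintro ⟨i, r, hr, hper⟩
    obtain ⟨s, rfl⟩ : ∃ s, r = s + 1 := ⟨r - 1, by omega⟩
    rw [Function.iterate_succ_apply'] at hper
    exact ⟨(fun x : R => x ^ 2 + i)^[s] (i + a), by linear_combination -hper⟩

theorem stmt_7 (p : ℕ) (hp : p.Prime) (hp3 : 3 ≤ p) :
    {a : ZMod p | ∀ i : ZMod p, ∀ r : ℕ, 1 ≤ r →
      (fun x : ZMod p => x ^ 2 + i)^[r] (i + a) ≠ i + a}.ncard = (p - 1) / 2 := by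
  have : Fact p.Prime := ⟨hp⟩
  have hchar : ringChar (ZMod p) ≠ 2 := by
    rw [ZMod.ringChar_zmod_n]
    omega
  have hdesert : {a : ZMod p | ∀ i : ZMod p, ∀ r : ℕ, 1 ≤ r →
      (fun x : ZMod p => x ^ 2 + i)^[r] (i + a) ≠ i + a} = {a | ¬IsSquare a} := by
    ext a
    simp only [Set.mem_ofPred_eq, isSquare_iff_exists_periodic_shift]
    push Not
    rfl
  rw [hdesert, FiniteField.ncard_not_isSquare hchar, ZMod.card]
end

section
/- Let p be a prime, n ≥ 2 an integer, and a ∈ F_p an n-power non-residue (a ≠ 0 and x^n = a has no solution in F_p). Then for every i ∈ F_p and every r ≥ 1, h_i^r(i + a) ≠ i + a, where h_c(x) = x^n + c. -/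
open Function

theorem add_notMem_periodicPts_pow_add {R : Type*} [Ring R] {n : ℕ} {a : R}
    (ha : ¬∃ x : R, x ^ n = a) (c : R) : c + a ∉ periodicPts (fun x : R => x ^ n + c) := by
  intro hper
  obtain ⟨x, hx⟩ := periodicPts_subset_range hper
  exact ha ⟨x, add_right_cancel (hx.trans (add_comm c a))⟩

theorem stmt_8_general (p : ℕ) (n : ℕ) (a : ZMod p)
    (hnr : ¬∃ x : ZMod p, x ^ n = a) :
    ∀ i : ZMod p, ∀ r : ℕ, 1 ≤ r →
      (fun x : ZMod p => x ^ n + i)^[r] (i + a) ≠ i + a :=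
  fun i r hr hper => add_notMem_periodicPts_pow_add hnr i ⟨r, hr, hper⟩

theorem stmt_8 (p : ℕ) (hp : p.Prime) (n : ℕ) (hn : 2 ≤ n) (a : ZMod p)
    (ha : a ≠ 0) (hnr : ¬∃ x : ZMod p, x ^ n = a) :
    ∀ i : ZMod p, ∀ r : ℕ, 1 ≤ r →
      (fun x : ZMod p => x ^ n + i)^[r] (i + a) ≠ i + a :=
  stmt_8_general p n a hnr
end

section
/- Let p be a prime, n ≥ 2 an integer, and let Per(n, p) denote the number of pairs (c, a) ∈ F_p × F_p such that a is a periodic point of h_c(x) = x^n + c (h_c^r(a) = a for some r ≥ 1). Then p ≤ Per(n, p) ≤ p(p-1)/gcd(n, p-1) + p. -/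
/-!
If `a` is periodic for `h_c(x) = x ^ n + c`, then `a` lies in the image of `h_c`, so `a - c` is an
`n`-th power. The shear `(c, a) ↦ (a - c, c)` is injective, hence there are at most
`#{n-th powers} * p` periodic pairs; the `n`-th powers are `0` together with the image of the
`n`-th power map of the cyclic group `F_pˣ`, which has `(p - 1) / gcd(n, p - 1)` elements.
For the lower bound, every `a` is a fixed point of `h_c` for `c = a - a ^ n`.
-/

open Function Set

def periodicPairs (R : Type*) [Semiring R] (n : ℕ) : Set (R × R) :=
  {q | q.2 ∈ periodicPts fun x => x ^ n + q.1}

theorem card_le_ncard_periodicPairs (R : Type*) [Ring R] [Finite R] (n : ℕ) :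
    Nat.card R ≤ (periodicPairs R n).ncard := by
  have hfix : range (fun a : R => (a - a ^ n, a)) ⊆ periodicPairs R n := by
    rintro _ ⟨a, rfl⟩
    exact ⟨1, one_pos, by simp [IsPeriodicPt, IsFixedPt]⟩
  calc Nat.card R = (range fun a : R => (a - a ^ n, a)).ncard := by
        rw [← image_univ, ncard_image_of_injective _ fun a b h => congrArg Prod.snd h, ncard_univ]
    _ ≤ (periodicPairs R n).ncard := ncard_le_ncard hfix

theorem sub_mem_range_pow_of_mem_periodicPairs {R : Type*} [Ring R] {n : ℕ} {q : R × R}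
    (hq : q ∈ periodicPairs R n) : q.2 - q.1 ∈ range (· ^ n : R → R) := by
  obtain ⟨y, hy⟩ := periodicPts_subset_range hq
  exact ⟨y, eq_sub_of_add_eq hy⟩

theorem ncard_setOf_sub_mem {G : Type*} [AddGroup G] [Finite G] (D : Set G) :
    {q : G × G | q.2 - q.1 ∈ D}.ncard = D.ncard * Nat.card G := by
  have hshear :
      {q : G × G | q.2 - q.1 ∈ D} = (fun q : G × G => (q.2 - q.1, q.1)) ⁻¹' D ×ˢ univ := by
    ext; simp
  rw [hshear, ncard_preimage_of_injective_subset_range, ncard_prod, ncard_univ]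
  · rintro ⟨c, a⟩ ⟨c', a'⟩ h
    simp only [Prod.mk.injEq] at h
    obtain ⟨h1, rfl⟩ := h
    simpa using h1
  · rintro ⟨d, c⟩ -
    exact ⟨(c, d + c), by simp⟩

theorem range_pow_subset_insert_zero {M : Type*} [CommGroupWithZero M] (n : ℕ) :
    range (· ^ n : M → M) ⊆ insert 0 (Units.val '' (powMonoidHom n : Mˣ →* Mˣ).range) := by
  rintro _ ⟨x, rfl⟩
  rcases eq_or_ne x 0 with rfl | hx
  · rcases eq_or_ne n 0 with rfl | hn
    · exact Or.inr ⟨1, ⟨1, one_pow 0⟩, by simp⟩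
    · exact Or.inl (zero_pow hn)
  · exact Or.inr ⟨Units.mk0 x hx ^ n, ⟨_, rfl⟩, by simp⟩

theorem ncard_range_pow_le {K : Type*} [Field K] [Finite K] (n : ℕ) :
    (range (· ^ n : K → K)).ncard ≤ (Nat.card K - 1) / Nat.gcd n (Nat.card K - 1) + 1 := by
  set H := (powMonoidHom n : Kˣ →* Kˣ).range
  calc (range (· ^ n : K → K)).ncard ≤ (insert 0 (Units.val '' (H : Set Kˣ))).ncard :=
        ncard_le_ncard (range_pow_subset_insert_zero n)
    _ ≤ (Units.val '' (H : Set Kˣ)).ncard + 1 := ncard_insert_le _ _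
    _ = Nat.card H + 1 := by
        rw [ncard_image_of_injective _ Units.val_injective, ← Nat.card_coe_set_eq]; rfl
    _ = (Nat.card K - 1) / Nat.gcd n (Nat.card K - 1) + 1 := by
        rw [IsCyclic.card_powMonoidHom_range, Nat.card_units, Nat.gcd_comm]

theorem ncard_periodicPairs_le (K : Type*) [Field K] [Finite K] (n : ℕ) :
    (periodicPairs K n).ncard ≤
      ((Nat.card K - 1) / Nat.gcd n (Nat.card K - 1) + 1) * Nat.card K :=
  calc (periodicPairs K n).ncard
      ≤ {q : K × K | q.2 - q.1 ∈ range (· ^ n : K → K)}.ncard :=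
        ncard_le_ncard fun _ => sub_mem_range_pow_of_mem_periodicPairs
    _ = (range (· ^ n : K → K)).ncard * Nat.card K := ncard_setOf_sub_mem _
    _ ≤ _ := Nat.mul_le_mul_right _ (ncard_range_pow_le n)

theorem stmt_16_general (p : ℕ) (hp : p.Prime) (n : ℕ) :
    p ≤ {q : ZMod p × ZMod p | ∃ r : ℕ, 1 ≤ r ∧
          (fun x : ZMod p => x ^ n + q.1)^[r] q.2 = q.2}.ncard ∧
    {q : ZMod p × ZMod p | ∃ r : ℕ, 1 ≤ r ∧
          (fun x : ZMod p => x ^ n + q.1)^[r] q.2 = q.2}.ncard ≤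
      p * ((p - 1) / Nat.gcd n (p - 1)) + p := by
  have := Fact.mk hp
  -- `periodicPts` asks for `0 < r`, which on `ℕ` is definitionally `1 ≤ r`
  change p ≤ (periodicPairs (ZMod p) n).ncard ∧
    (periodicPairs (ZMod p) n).ncard ≤ p * ((p - 1) / Nat.gcd n (p - 1)) + p
  have hlower := card_le_ncard_periodicPairs (ZMod p) n
  have hupper := ncard_periodicPairs_le (ZMod p) n
  rw [Nat.card_zmod] at hlower hupper
  exact ⟨hlower, by linarith⟩

theorem stmt_16 (p : ℕ) (hp : p.Prime) (n : ℕ) (hn : 2 ≤ n) :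
    p ≤ {q : ZMod p × ZMod p | ∃ r : ℕ, 1 ≤ r ∧
          (fun x : ZMod p => x ^ n + q.1)^[r] q.2 = q.2}.ncard ∧
    {q : ZMod p × ZMod p | ∃ r : ℕ, 1 ≤ r ∧
          (fun x : ZMod p => x ^ n + q.1)^[r] q.2 = q.2}.ncard ≤
      p * ((p - 1) / Nat.gcd n (p - 1)) + p :=
  stmt_16_general p hp n
end
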